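/- Let A1, A2 ∈ ℂ^{n×n}, F1, F2 ∈ ℂ^{p×p}, C1, C2 ∈ ℂ^{n×p}, and set 𝒜 := lift(A1,A2), ℱ := lift(F1,F2), 𝒞 := lift(C1,C2). Assume |α|·|β| < 1 for every eigenvalue α of 𝒜 and every eigenvalue β of ℱ. Then the series 𝒳 := Σ_{k=0}^{∞} 𝒜^k·𝒞·ℱ^k converges, 𝒳 is of complex-lifting form (i.e., there exist X1, X2 ∈ ℂ^{n×p} with 𝒳 = lift(X1,X2)), and (X1, X2) is the unique pair of n×p complex matrices satisfying the coupled Stein equations X1 = A1X1F1 + A2^#X2F1 + A1X2^#F2 + A2^#X1^#F2 + C1 and X2 = A1^#X1^#F2 + A2X2^#F2 + A1^#X2F1 + A2X1F1 + C2. -/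

import Mathlib

open Matrix

/-- Entrywise complex conjugate of a complex matrix. -/
noncomputable def mconj {n m : Type*} (M : Matrix n m ℂ) : Matrix n m ℂ :=
  M.map (starRingEnd ℂ)

/-- The complex lifting `lift(M1,M2) = [[M1, M2^#],[M2, M1^#]]`. -/
noncomputable def clift {n m : Type*} (M1 M2 : Matrix n m ℂ) :
    Matrix (n ⊕ n) (m ⊕ m) ℂ :=
  Matrix.fromBlocks M1 (mconj M2) M2 (mconj M1)

/-! ### Auxiliary material -/

open Filter

attribute [local instance] Matrix.linftyOpNormedAddCommGroup Matrix.linftyOpNormedRing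
  Matrix.linftyOpNormedAlgebra Matrix.linftyOpNormedSpace

noncomputable local instance mcs {m q : Type*} [Fintype q] : CompleteSpace (Matrix m q ℂ) :=
  inferInstanceAs (CompleteSpace (m → q → ℂ))

/-- Geometric bound on powers from a spectral radius bound. -/
lemma pow_bound {m : Type*} [Fintype m] [DecidableEq m]
    (A : Matrix m m ℂ) (r : NNReal) (hr : 0 < r) (h : spectralRadius ℂ A < r) :
    ∃ C : NNReal, 1 ≤ C ∧ ∀ k, ‖A ^ k‖₊ ≤ C * r ^ k := by
  have htend := spectrum.pow_nnnorm_pow_one_div_tendsto_nhds_spectralRadius A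
  have hev : ∀ᶠ k : ℕ in atTop, ((‖A ^ k‖₊ : ENNReal)) ^ (1 / (k:ℝ)) < (r : ENNReal) :=
    htend.eventually_lt_const h
  obtain ⟨N, hN⟩ := (hev.and (eventually_ge_atTop 1)).exists_forall_of_atTop
  have key : ∀ k, N ≤ k → ‖A ^ k‖₊ ≤ r ^ k := by
    intro k hk
    obtain ⟨hlt, hk1⟩ := hN k hk
    have hkR : (k : ℝ) ≠ 0 := by exact_mod_cast Nat.one_le_iff_ne_zero.mp hk1
    have h2 : ((‖A ^ k‖₊ : ENNReal) ^ (1 / (k:ℝ))) ^ (k : ℝ) ≤ ((r : ENNReal)) ^ (k:ℝ) :=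
      ENNReal.rpow_le_rpow hlt.le (by positivity)
    rw [← ENNReal.rpow_mul, one_div, inv_mul_cancel₀ hkR,
      ENNReal.rpow_one, ENNReal.rpow_natCast] at h2
    exact_mod_cast (ENNReal.coe_pow r k ▸ h2)
  set C : NNReal := 1 + (Finset.range N).sup (fun k => ‖A ^ k‖₊ * (r⁻¹) ^ k) with hC
  refine ⟨C, le_add_right le_rfl, fun k => ?_⟩
  rcases lt_or_ge k N with hk | hk
  · have h1 : ‖A ^ k‖₊ * (r⁻¹) ^ k ≤ C :=
      le_add_left (Finset.le_sup (f := fun k => ‖A ^ k‖₊ * (r⁻¹) ^ k) (Finset.mem_range.mpr hk))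
    calc ‖A ^ k‖₊ = (‖A ^ k‖₊ * (r⁻¹) ^ k) * r ^ k := by
          rw [mul_assoc, ← mul_pow, inv_mul_cancel₀ hr.ne', one_pow, mul_one]
      _ ≤ C * r ^ k := mul_le_mul_left h1 _
  · calc ‖A ^ k‖₊ ≤ r ^ k := key k hk
      _ ≤ C * r ^ k := le_mul_of_one_le_left zero_le (le_add_right le_rfl)

section Core
variable {m q : Type*} [Fintype m] [Fintype q] [DecidableEq m] [DecidableEq q]

/-- the continuous linear map `M ↦ 𝒜 M ℱ`. -/
noncomputable def steinOp (𝒜 : Matrix m m ℂ) (ℱ : Matrix q q ℂ) :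
    Matrix m q ℂ →L[ℂ] Matrix m q ℂ :=
  LinearMap.mkContinuous
    { toFun := fun M => 𝒜 * M * ℱ
      map_add' := fun M N => by rw [Matrix.mul_add, Matrix.add_mul]
      map_smul' := fun c M => by
        simp [Matrix.mul_smul, Matrix.smul_mul] }
    (‖𝒜‖ * ‖ℱ‖) (fun M => by
      calc ‖𝒜 * M * ℱ‖ ≤ ‖𝒜 * M‖ * ‖ℱ‖ := Matrix.linfty_opNorm_mul _ _
        _ ≤ ‖𝒜‖ * ‖M‖ * ‖ℱ‖ :=
            mul_le_mul_of_nonneg_right (Matrix.linfty_opNorm_mul _ _) (norm_nonneg _)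
        _ = ‖𝒜‖ * ‖ℱ‖ * ‖M‖ := by ring)

/-- Evaluation of an entry of a matrix, as a continuous linear map. -/
noncomputable def entryCLM (i : m) (j : q) : Matrix m q ℂ →L[ℂ] ℂ :=
  LinearMap.mkContinuous
    { toFun := fun M => M i j
      map_add' := fun _ _ => rfl
      map_smul' := fun _ _ => rfl }
    1 (fun M => by
      rw [one_mul]
      have : ‖M i j‖₊ ≤ ‖M‖₊ := by
        rw [Matrix.linfty_opNNNorm_def]
        exact le_trans (Finset.single_le_sum (f := fun j => ‖M i j‖₊) (fun _ _ => zero_le)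
          (Finset.mem_univ j))
          (Finset.le_sup (f := fun i => ∑ j, ‖M i j‖₊) (Finset.mem_univ i))
      exact_mod_cast this)

omit [DecidableEq m] [DecidableEq q] in
@[simp] lemma entryCLM_apply (i : m) (j : q) (M : Matrix m q ℂ) :
    entryCLM i j M = M i j := rfl

/-- Existence and uniqueness of a solution of the Stein equation, together with the
series representation, under a geometric bound on powers. -/
lemma core (𝒜 : Matrix m m ℂ) (ℱ : Matrix q q ℂ) (𝒞 : Matrix m q ℂ)
    (C r : NNReal) (hr : r < 1) (hb : ∀ k, ‖𝒜 ^ k‖₊ * ‖ℱ ^ k‖₊ ≤ C * r ^ k) :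
    ∃ X : Matrix m q ℂ, HasSum (fun k => 𝒜 ^ k * 𝒞 * ℱ ^ k) X ∧
      X = 𝒜 * X * ℱ + 𝒞 ∧ (∀ Y, Y = 𝒜 * Y * ℱ + 𝒞 → Y = X) := by
  set f : ℕ → Matrix m q ℂ := fun k => 𝒜 ^ k * 𝒞 * ℱ ^ k with hf
  have hnorm : ∀ k, ‖f k‖ ≤ (‖𝒞‖ * C) * r ^ k := by
    intro k
    calc ‖f k‖ ≤ ‖𝒜 ^ k * 𝒞‖ * ‖ℱ ^ k‖ := Matrix.linfty_opNorm_mul _ _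
      _ ≤ ‖𝒜 ^ k‖ * ‖𝒞‖ * ‖ℱ ^ k‖ :=
          mul_le_mul_of_nonneg_right (Matrix.linfty_opNorm_mul _ _) (norm_nonneg _)
      _ = ‖𝒞‖ * (‖𝒜 ^ k‖ * ‖ℱ ^ k‖) := by ring
      _ ≤ ‖𝒞‖ * (C * r ^ k) :=
          mul_le_mul_of_nonneg_left (by exact_mod_cast hb k) (norm_nonneg _)
      _ = (‖𝒞‖ * C) * r ^ k := by ring
  have hsummable : Summable f :=
    Summable.of_norm_bounded
      ((summable_geometric_of_lt_one r.coe_nonneg (by exact_mod_cast hr)).mul_left _) hnorm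
  obtain ⟨X, hX⟩ := hsummable
  have hT : ∀ M : Matrix m q ℂ, steinOp 𝒜 ℱ M = 𝒜 * M * ℱ := fun _ => rfl
  have hstep : ∀ k, steinOp 𝒜 ℱ (f k) = f (k + 1) := by
    intro k
    simp only [hT, hf, pow_succ]
    rw [show 𝒜 ^ k * 𝒜 = 𝒜 * 𝒜 ^ k from (Commute.self_pow 𝒜 k).symm]
    simp [Matrix.mul_assoc]
  have h1 : HasSum (fun k => f (k + 1)) (X - f 0) := by
    refine (hasSum_nat_add_iff (f := f) 1).mpr ?_
    simpa using hX
  have h2 : HasSum (fun k => f (k + 1)) (steinOp 𝒜 ℱ X) := by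
    have := (steinOp 𝒜 ℱ).hasSum hX
    simpa only [hstep] using this
  have hfix : X = 𝒜 * X * ℱ + 𝒞 := by
    have := h2.unique h1
    rw [hT] at this
    have hf0 : f 0 = 𝒞 := by simp [hf]
    rw [hf0] at this
    exact (sub_eq_iff_eq_add.mp this.symm)
  refine ⟨X, hX, hfix, ?_⟩
  intro Y hY
  set D : Matrix m q ℂ := Y - X with hD
  have hDfix : D = 𝒜 * D * ℱ := by
    rw [hD, Matrix.mul_sub, Matrix.sub_mul]
    conv_lhs => rw [hY, hfix]
    abel
  have hDk : ∀ k, D = 𝒜 ^ k * D * ℱ ^ k := by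
    intro k
    induction k with
    | zero => simp
    | succ k ih =>
      calc D = 𝒜 * D * ℱ := hDfix
        _ = 𝒜 * (𝒜 ^ k * D * ℱ ^ k) * ℱ := by rw [← ih]
        _ = 𝒜 ^ (k + 1) * D * ℱ ^ (k + 1) := by
            rw [pow_succ, pow_succ,
              show 𝒜 ^ k * 𝒜 = 𝒜 * 𝒜 ^ k from (Commute.self_pow 𝒜 k).symm]
            simp [Matrix.mul_assoc]
  have hDnorm : ∀ k, ‖D‖ ≤ (‖D‖ * C) * r ^ k := by
    intro k
    calc ‖D‖ = ‖𝒜 ^ k * D * ℱ ^ k‖ := by rw [← hDk k]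
      _ ≤ ‖𝒜 ^ k * D‖ * ‖ℱ ^ k‖ := Matrix.linfty_opNorm_mul _ _
      _ ≤ ‖𝒜 ^ k‖ * ‖D‖ * ‖ℱ ^ k‖ :=
          mul_le_mul_of_nonneg_right (Matrix.linfty_opNorm_mul _ _) (norm_nonneg _)
      _ = ‖D‖ * (‖𝒜 ^ k‖ * ‖ℱ ^ k‖) := by ring
      _ ≤ ‖D‖ * (C * r ^ k) :=
          mul_le_mul_of_nonneg_left (by exact_mod_cast hb k) (norm_nonneg _)
      _ = (‖D‖ * C) * r ^ k := by ring
  have htends : Tendsto (fun k : ℕ => (‖D‖ * C) * (r : ℝ) ^ k) atTop (nhds 0) := by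
    rw [show (0:ℝ) = (‖D‖ * C) * 0 by ring]
    exact (tendsto_pow_atTop_nhds_zero_of_lt_one r.coe_nonneg
      (by exact_mod_cast hr)).const_mul _
  have hD0 : ‖D‖ ≤ 0 := le_of_tendsto_of_tendsto' tendsto_const_nhds htends hDnorm
  have : D = 0 := by
    rw [← norm_le_zero_iff]
    exact hD0
  rw [hD, sub_eq_zero] at this
  exact this

end Core

/-! ### Conjugation lemmas -/

lemma mconj_apply {n m : Type*} (M : Matrix n m ℂ) (i j) :
    mconj M i j = (starRingEnd ℂ) (M i j) := rfl

@[simp] lemma mconj_mconj {n m : Type*} (M : Matrix n m ℂ) : mconj (mconj M) = M := by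
  ext i j; simp [mconj_apply]

lemma mconj_add {n m : Type*} (M N : Matrix n m ℂ) :
    mconj (M + N) = mconj M + mconj N := by
  ext i j; simp [mconj_apply, Matrix.add_apply]

lemma mconj_mul {l m n : Type*} [Fintype m] (M : Matrix l m ℂ) (N : Matrix m n ℂ) :
    mconj (M * N) = mconj M * mconj N := Matrix.map_mul

/-- Conjugation combined with the block swap on a doubled index type. -/
noncomputable def flipconj {m q : Type*} (M : Matrix (m ⊕ m) (q ⊕ q) ℂ) :
    Matrix (m ⊕ m) (q ⊕ q) ℂ :=
  Matrix.of fun i j => (starRingEnd ℂ) (M i.swap j.swap)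

lemma flipconj_apply {m q : Type*} (M : Matrix (m ⊕ m) (q ⊕ q) ℂ) (i j) :
    flipconj M i j = (starRingEnd ℂ) (M i.swap j.swap) := rfl

@[simp] lemma flipconj_clift {m q : Type*} (M1 M2 : Matrix m q ℂ) :
    flipconj (clift M1 M2) = clift M1 M2 := by
  ext i j
  cases i <;> cases j <;> simp [flipconj_apply, clift, mconj_apply, Matrix.fromBlocks]

lemma eq_clift_of_flipconj {m q : Type*} {M : Matrix (m ⊕ m) (q ⊕ q) ℂ}
    (h : flipconj M = M) : M = clift M.toBlocks₁₁ M.toBlocks₂₁ := by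
  ext i j
  have he : ∀ i j, (starRingEnd ℂ) (M (Sum.swap i) (Sum.swap j)) = M i j := fun i j =>
    congrFun (congrFun h i) j
  cases i <;> cases j <;>
    simp [clift, mconj_apply, Matrix.fromBlocks, Matrix.toBlocks₁₁, Matrix.toBlocks₂₁] <;>
    rw [← he] <;> simp [Sum.swap]

lemma flipconj_add {m q : Type*} (M N : Matrix (m ⊕ m) (q ⊕ q) ℂ) :
    flipconj (M + N) = flipconj M + flipconj N := by
  ext i j; simp [flipconj_apply, Matrix.add_apply]

lemma flipconj_mul {m q l : Type*} [Fintype q] (M : Matrix (m ⊕ m) (q ⊕ q) ℂ)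
    (N : Matrix (q ⊕ q) (l ⊕ l) ℂ) :
    flipconj (M * N) = flipconj M * flipconj N := by
  ext i j
  simp only [flipconj_apply, Matrix.mul_apply, map_sum, _root_.map_mul]
  exact Fintype.sum_equiv (Equiv.sumComm q q) _ _ (fun k => by
    simp [flipconj_apply, Equiv.sumComm_apply, Sum.swap_swap])

/-- The lifted Stein equation is equivalent to the coupled Stein equations. -/
lemma clift_stein_iff {m q : Type*} [Fintype m] [Fintype q]
    (A1 A2 : Matrix m m ℂ) (F1 F2 : Matrix q q ℂ) (C1 C2 X1 X2 : Matrix m q ℂ) :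
    clift X1 X2 = clift A1 A2 * clift X1 X2 * clift F1 F2 + clift C1 C2 ↔
      (X1 = A1 * X1 * F1 + mconj A2 * X2 * F1 + A1 * mconj X2 * F2
          + mconj A2 * mconj X1 * F2 + C1 ∧
        X2 = mconj A1 * mconj X1 * F2 + A2 * mconj X2 * F2 + mconj A1 * X2 * F1
          + A2 * X1 * F1 + C2) := by
  rw [clift, clift, clift, clift, Matrix.fromBlocks_multiply, Matrix.fromBlocks_multiply,
    Matrix.fromBlocks_add, Matrix.fromBlocks_inj]
  constructor
  · rintro ⟨b11, b12, b21, b22⟩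
    constructor
    · conv_lhs => rw [b11]
      simp only [Matrix.add_mul]
      abel
    · conv_lhs => rw [b21]
      simp only [Matrix.add_mul]
      abel
  · rintro ⟨e1, e2⟩
    refine ⟨?_, ?_, ?_, ?_⟩
    · conv_lhs => rw [e1]
      simp only [Matrix.add_mul]
      abel
    · have h2 := congrArg mconj e2
      simp only [mconj_add, mconj_mul, mconj_mconj] at h2
      conv_lhs => rw [h2]
      simp only [Matrix.add_mul]
      abel
    · conv_lhs => rw [e2]
      simp only [Matrix.add_mul]
      abel
    · have h1 := congrArg mconj e1
      simp only [mconj_add, mconj_mul, mconj_mconj] at h1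
      conv_lhs => rw [h1]
      simp only [Matrix.add_mul]
      abel

/-- under the spectral radius condition, the series
`Σₖ 𝒜^k 𝒞 ℱ^k` converges entrywise, its sum is of complex-lifting form
`lift(X1,X2)`, and `(X1,X2)` is the unique solution of the coupled Stein
equations. -/
theorem stmt_18 {n p : ℕ}
    (A1 A2 : Matrix (Fin n) (Fin n) ℂ) (F1 F2 : Matrix (Fin p) (Fin p) ℂ)
    (C1 C2 : Matrix (Fin n) (Fin p) ℂ)
    (hspec : ∀ α ∈ spectrum ℂ (clift A1 A2), ∀ β ∈ spectrum ℂ (clift F1 F2),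
      ‖α‖ * ‖β‖ < 1) :
    ∃ X1 X2 : Matrix (Fin n) (Fin p) ℂ,
      (∀ (i : Fin n ⊕ Fin n) (j : Fin p ⊕ Fin p),
        HasSum (fun k : ℕ =>
          ((clift A1 A2) ^ k * clift C1 C2 * (clift F1 F2) ^ k) i j)
          (clift X1 X2 i j)) ∧
      (X1 = A1 * X1 * F1 + mconj A2 * X2 * F1 + A1 * mconj X2 * F2
          + mconj A2 * mconj X1 * F2 + C1 ∧
        X2 = mconj A1 * mconj X1 * F2 + A2 * mconj X2 * F2 + mconj A1 * X2 * F1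
          + A2 * X1 * F1 + C2) ∧
      (∀ X1' X2' : Matrix (Fin n) (Fin p) ℂ,
        (X1' = A1 * X1' * F1 + mconj A2 * X2' * F1 + A1 * mconj X2' * F2
            + mconj A2 * mconj X1' * F2 + C1 ∧
          X2' = mconj A1 * mconj X1' * F2 + A2 * mconj X2' * F2 + mconj A1 * X2' * F1
            + A2 * X1' * F1 + C2) →
        X1' = X1 ∧ X2' = X2) := by
  rcases Nat.eq_zero_or_pos n with hn | hn
  · subst hn
    haveI : Subsingleton (Matrix (Fin 0) (Fin p) ℂ) :=
      inferInstanceAs (Subsingleton (Fin 0 → Fin p → ℂ))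
    refine ⟨0, 0, ?_, ⟨Subsingleton.elim _ _, Subsingleton.elim _ _⟩,
      fun _ _ _ => ⟨Subsingleton.elim _ _, Subsingleton.elim _ _⟩⟩
    intro i j
    cases i with
    | inl x => exact x.elim0
    | inr x => exact x.elim0
  rcases Nat.eq_zero_or_pos p with hp | hp
  · subst hp
    haveI : Subsingleton (Matrix (Fin n) (Fin 0) ℂ) :=
      inferInstanceAs (Subsingleton (Fin n → Fin 0 → ℂ))
    refine ⟨0, 0, ?_, ⟨Subsingleton.elim _ _, Subsingleton.elim _ _⟩,
      fun _ _ _ => ⟨Subsingleton.elim _ _, Subsingleton.elim _ _⟩⟩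
    intro i j
    cases j with
    | inl x => exact x.elim0
    | inr x => exact x.elim0
  haveI : Nonempty (Fin n) := ⟨⟨0, hn⟩⟩
  haveI : Nonempty (Fin p) := ⟨⟨0, hp⟩⟩
  obtain ⟨α, hα, hαr⟩ := spectrum.exists_nnnorm_eq_spectralRadius (a := clift A1 A2)
  obtain ⟨β, hβ, hβr⟩ := spectrum.exists_nnnorm_eq_spectralRadius (a := clift F1 F2)
  set a : NNReal := ‖α‖₊ with ha
  set b : NNReal := ‖β‖₊ with hbdef
  have hab : (a : ℝ) * (b : ℝ) < 1 := by
    have := hspec α hα β hβ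
    simpa [ha, hbdef, coe_nnnorm] using this
  have ha0 : (0:ℝ) ≤ a := a.coe_nonneg
  have hb0 : (0:ℝ) ≤ b := b.coe_nonneg
  set ε : ℝ := min 1 ((1 - (a:ℝ) * b) / ((a:ℝ) + b + 2)) with hε
  have hεpos : 0 < ε := by
    apply lt_min one_pos
    apply div_pos (by linarith) (by linarith)
  have hεone : ε ≤ 1 := min_le_left _ _
  have hεdiv : ε ≤ (1 - (a:ℝ) * b) / ((a:ℝ) + b + 2) := min_le_right _ _
  have h3 : ε * ((a:ℝ) + b + 2) ≤ 1 - (a:ℝ) * b :=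
    (le_div_iff₀ (by linarith)).mp hεdiv
  have hlt : ((a:ℝ) + ε) * ((b:ℝ) + ε) < 1 := by nlinarith
  set εN : NNReal := ε.toNNReal with hεN
  have hεNpos : 0 < εN := Real.toNNReal_pos.mpr hεpos
  set rA : NNReal := a + εN with hrA
  set rF : NNReal := b + εN with hrF
  have hrApos : 0 < rA := lt_of_lt_of_le hεNpos (le_add_self)
  have hrFpos : 0 < rF := lt_of_lt_of_le hεNpos (le_add_self)
  have hρA : spectralRadius ℂ (clift A1 A2) < rA := by
    rw [← hαr]
    exact_mod_cast lt_add_of_pos_right a hεNpos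
  have hρF : spectralRadius ℂ (clift F1 F2) < rF := by
    rw [← hβr]
    exact_mod_cast lt_add_of_pos_right b hεNpos
  have hr1 : rA * rF < 1 := by
    have hcoe : ((rA * rF : NNReal) : ℝ) < 1 := by
      push_cast [hrA, hrF, hεN, Real.coe_toNNReal _ hεpos.le]
      exact hlt
    exact_mod_cast hcoe
  obtain ⟨CA, hCA1, hCA⟩ := pow_bound (clift A1 A2) rA hrApos hρA
  obtain ⟨CF, hCF1, hCF⟩ := pow_bound (clift F1 F2) rF hrFpos hρF
  have hb : ∀ k, ‖(clift A1 A2) ^ k‖₊ * ‖(clift F1 F2) ^ k‖₊ ≤ (CA * CF) * (rA * rF) ^ k := by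
    intro k
    calc ‖(clift A1 A2) ^ k‖₊ * ‖(clift F1 F2) ^ k‖₊
        ≤ (CA * rA ^ k) * (CF * rF ^ k) := mul_le_mul' (hCA k) (hCF k)
      _ = (CA * CF) * (rA * rF) ^ k := by rw [mul_pow]; ring
  obtain ⟨X, hXsum, hXfix, huniq⟩ := core (clift A1 A2) (clift F1 F2) (clift C1 C2)
    (CA * CF) (rA * rF) hr1 hb
  have hflip : flipconj X = X := by
    apply huniq
    have := congrArg flipconj hXfix
    rw [flipconj_add, flipconj_mul, flipconj_mul, flipconj_clift, flipconj_clift,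
      flipconj_clift] at this
    exact this
  have hXc : X = clift X.toBlocks₁₁ X.toBlocks₂₁ := eq_clift_of_flipconj hflip
  refine ⟨X.toBlocks₁₁, X.toBlocks₂₁, ?_, ?_, ?_⟩
  · intro i j
    rw [← hXc]
    have h := (entryCLM i j).hasSum hXsum
    simp only [entryCLM_apply] at h
    exact h
  · have h : clift X.toBlocks₁₁ X.toBlocks₂₁
        = clift A1 A2 * clift X.toBlocks₁₁ X.toBlocks₂₁ * clift F1 F2 + clift C1 C2 := by
      rw [← hXc]; exact hXfix
    exact (clift_stein_iff A1 A2 F1 F2 C1 C2 _ _).mp h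
  · intro X1' X2' he
    have h' := (clift_stein_iff A1 A2 F1 F2 C1 C2 X1' X2').mpr he
    have heq : clift X1' X2' = X := huniq _ h'
    rw [hXc] at heq
    constructor
    · have := congrArg Matrix.toBlocks₁₁ heq
      simpa [clift, Matrix.toBlocks_fromBlocks₁₁] using this
    · have := congrArg Matrix.toBlocks₂₁ heq
      simpa [clift, Matrix.toBlocks_fromBlocks₂₁] using this
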